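/- arXiv:2304.04116 — 3 statements merged into one kernel-verified Lean document; each statement's English description precedes it below -/
import Mathlib

section
/- Let l ∈ S be a segmentation, a > 0, and for each ω ∈ Ω let X(ω) be a random vector in ℝ^n whose distribution is the centered isotropic Gaussian with covariance a²·I_n. Define the noisy segmentation L(ω) = l(ω + X(ω)) if ω + X(ω) ∈ Ω and L(ω) = 0 otherwise. Then the expected volume of L satisfies E[‖L‖₁] = ‖l‖₁ − ξ, where ξ = ∫_Ω ∫_{ℝ^n∖Ω} l(ω') · p_{a²}(ω − ω') λ(dω) λ(dω'). -/
open MeasureTheory Real Set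
open scoped ENNReal

noncomputable section

/-- The unit cube `Ω = [0,1]^n` in `ℝ^n`. -/
def cube (n : ℕ) : Set (EuclideanSpace ℝ (Fin n)) :=
  (WithLp.ofLp : EuclideanSpace ℝ (Fin n) → (Fin n → ℝ)) ⁻¹' (Set.univ.pi fun _ => Set.Icc (0:ℝ) 1)

/-- Lebesgue measure restricted to the unit cube. -/
def lam (n : ℕ) : Measure (EuclideanSpace ℝ (Fin n)) := volume.restrict (cube n)

/-- `S`: measurable functions `Ω → {0,1}` (as real-valued functions on `ℝ^n`). -/
def IsSeg {n : ℕ} (s : EuclideanSpace ℝ (Fin n) → ℝ) : Prop :=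
  Measurable s ∧ ∀ ω, s ω = 0 ∨ s ω = 1

/-- `M`: measurable functions `Ω → [0,1]`. -/
def IsSoft {n : ℕ} (m : EuclideanSpace ℝ (Fin n) → ℝ) : Prop :=
  Measurable m ∧ ∀ ω, m ω ∈ Set.Icc (0:ℝ) 1

/-- `‖f‖₁ = ∫_Ω |f| dλ`. -/
def l1 {n : ℕ} (f : EuclideanSpace ℝ (Fin n) → ℝ) : ℝ := ∫ ω, |f ω| ∂(lam n)

/-- Accuracy `A_m(s)`. -/
def accur {n : ℕ} (m s : EuclideanSpace ℝ (Fin n) → ℝ) : ℝ :=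
  ∫ ω, (s ω * m ω + (1 - s ω) * (1 - m ω)) ∂(lam n)

/-- Dice `D_m(s)`. -/
def dice {n : ℕ} (m s : EuclideanSpace ℝ (Fin n) → ℝ) : ℝ :=
  2 * (∫ ω, s ω * m ω ∂(lam n)) / (l1 s + l1 m)

/-- soft-Dice `SD_m(c)`. -/
def sdice {n : ℕ} (m c : EuclideanSpace ℝ (Fin n) → ℝ) : ℝ :=
  1 - 2 * (∫ ω, c ω * m ω ∂(lam n)) / (l1 c + l1 m)

/-- pointwise cross-entropy term `-(m log c)` in `[0,∞]`, with `0·log 0 = 0`, `log 0 = -∞`. -/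
def ceTerm (m c : ℝ) : ℝ≥0∞ :=
  if m = 0 then 0 else if c = 0 then ⊤ else ENNReal.ofReal (-(m * Real.log c))

/-- cross-entropy `CE_m(c) ∈ [0,∞]`. -/
def crossEnt {n : ℕ} (m c : EuclideanSpace ℝ (Fin n) → ℝ) : ℝ≥0∞ :=
  ∫⁻ ω, (ceTerm (m ω) (c ω) + ceTerm (1 - m ω) (1 - c ω)) ∂(lam n)

/-- the thresholded segmentation `I_{[t,1]} ∘ c`. -/
def thresh {n : ℕ} (t : ℝ) (c : EuclideanSpace ℝ (Fin n) → ℝ) :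
    EuclideanSpace ℝ (Fin n) → ℝ := fun ω => if t ≤ c ω then 1 else 0

/-- `sup_{s' ∈ S} D_m(s')`. -/
def supDice {n : ℕ} (m : EuclideanSpace ℝ (Fin n) → ℝ) : ℝ :=
  ⨆ s' : {s' : EuclideanSpace ℝ (Fin n) → ℝ // IsSeg s'}, dice m s'.1

/-- the centered isotropic Gaussian density `p_{σ²}` on `ℝ^n`. -/
def pdens (n : ℕ) (σ2 : ℝ) (x : EuclideanSpace ℝ (Fin n)) : ℝ :=
  (2 * π * σ2) ^ (-(n:ℝ)/2) * Real.exp (-‖x‖^2 / (2 * σ2))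


namespace GaussianDeformAux

lemma pdens_cont (n : ℕ) (σ2 : ℝ) : Continuous (pdens n σ2) := by
  unfold pdens; fun_prop

lemma pdens_nonneg (n : ℕ) {σ2 : ℝ} (h : 0 < σ2) (x : EuclideanSpace ℝ (Fin n)) :
    0 ≤ pdens n σ2 x := by
  unfold pdens; positivity

lemma pdens_symm (n : ℕ) (σ2 : ℝ) (x y : EuclideanSpace ℝ (Fin n)) :
    pdens n σ2 (x - y) = pdens n σ2 (y - x) := by
  unfold pdens; rw [norm_sub_rev]

lemma exp_eq (n : ℕ) (σ2 : ℝ) (x : EuclideanSpace ℝ (Fin n)) :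
    Real.exp (-‖x‖^2 / (2*σ2)) = Real.exp (-(2*σ2)⁻¹ * ‖x‖^2) := by
  ring_nf

lemma pdens_integrable (n : ℕ) {σ2 : ℝ} (h : 0 < σ2) :
    Integrable (pdens n σ2) := by
  unfold pdens
  apply Integrable.const_mul
  have hb : 0 < (2 * σ2)⁻¹ := by positivity
  have : (fun x : EuclideanSpace ℝ (Fin n) => Real.exp (-‖x‖^2 / (2*σ2)))
      = fun x => ‖Complex.exp (-(((2*σ2)⁻¹ : ℝ):ℂ) * (‖x‖:ℂ)^2
          + 0 * ((inner ℝ (0 : EuclideanSpace ℝ (Fin n)) x : ℝ):ℂ))‖ := by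
    funext x
    rw [Complex.norm_exp]
    rw [show (-(((2*σ2)⁻¹ : ℝ):ℂ) * (‖x‖:ℂ)^2
        + 0 * ((inner ℝ (0 : EuclideanSpace ℝ (Fin n)) x : ℝ):ℂ))
        = (((-‖x‖^2/(2*σ2) : ℝ)):ℂ) by push_cast; ring, Complex.ofReal_re]
  rw [this]
  exact (GaussianFourier.integrable_cexp_neg_mul_sq_norm_add (by simpa using hb) 0
    (0 : EuclideanSpace ℝ (Fin n))).norm

lemma pdens_integral (n : ℕ) {σ2 : ℝ} (h : 0 < σ2) :
    ∫ x : EuclideanSpace ℝ (Fin n), pdens n σ2 x = 1 := by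
  unfold pdens
  rw [integral_const_mul]
  have hb : 0 < (2 * σ2)⁻¹ := by positivity
  simp_rw [exp_eq n σ2]
  rw [GaussianFourier.integral_rexp_neg_mul_sq_norm hb]
  rw [finrank_euclideanSpace_fin]
  have h2 : π / (2*σ2)⁻¹ = 2 * π * σ2 := by field_simp
  rw [h2, ← Real.rpow_add (by positivity)]
  rw [show -(n:ℝ)/2 + (n:ℝ)/2 = 0 by ring, Real.rpow_zero]

lemma pdens_lintegral (n : ℕ) {σ2 : ℝ} (h : 0 < σ2) :
    ∫⁻ x : EuclideanSpace ℝ (Fin n), ENNReal.ofReal (pdens n σ2 x) = 1 := by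
  rw [← ofReal_integral_eq_lintegral_ofReal (pdens_integrable n h)
    (Filter.Eventually.of_forall (pdens_nonneg n h))]
  rw [pdens_integral n h, ENNReal.ofReal_one]

lemma pdens_lintegral_sub (n : ℕ) {σ2 : ℝ} (h : 0 < σ2) (c : EuclideanSpace ℝ (Fin n)) :
    ∫⁻ x : EuclideanSpace ℝ (Fin n), ENNReal.ofReal (pdens n σ2 (x - c)) = 1 := by
  simp_rw [sub_eq_add_neg]
  rw [MeasureTheory.lintegral_add_right_eq_self
    (fun x => ENNReal.ofReal (pdens n σ2 x)) (-c)]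
  exact pdens_lintegral n h

lemma cube_measurable (n : ℕ) : MeasurableSet (cube n) :=
  ((isClosed_set_pi fun _ _ => isClosed_Icc).measurableSet).preimage (WithLp.measurable_ofLp 2 _)

lemma cube_volume (n : ℕ) : volume (cube n) = 1 := by
  have h := EuclideanSpace.volume_preserving_symm_measurableEquiv_toLp (Fin n)
  have hs : MeasurableSet (Set.univ.pi fun _ : Fin n => Set.Icc (0:ℝ) 1) :=
    MeasurableSet.univ_pi fun _ => measurableSet_Icc
  have heq : cube n = (MeasurableEquiv.toLp 2 (Fin n → ℝ)).symm ⁻¹'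
      (Set.univ.pi fun _ : Fin n => Set.Icc (0:ℝ) 1) := rfl
  rw [heq, h.measure_preimage hs.nullMeasurableSet, volume_pi_pi]
  simp

end GaussianDeformAux

open GaussianDeformAux

/-- **Theorem 2 (expected volume).** Under the Gaussian deformation noise model,
`E[‖L‖₁] = ‖l‖₁ - ξ` where
`ξ = ∫_Ω ∫_{ℝ^n∖Ω} l(ω') p_{a²}(ω - ω') λ(dω) λ(dω')`. -/
theorem expected_volume_of_gaussian_deformation
    (n : ℕ) (hn : 1 ≤ n)
    (l : EuclideanSpace ℝ (Fin n) → ℝ) (hl : IsSeg l)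
    (a : ℝ) (ha : 0 < a)
    {Θ : Type*} [MeasurableSpace Θ] (P : Measure Θ) [IsProbabilityMeasure P]
    (X : EuclideanSpace ℝ (Fin n) → Θ → EuclideanSpace ℝ (Fin n))
    (hXmeas : Measurable fun p : EuclideanSpace ℝ (Fin n) × Θ => X p.1 p.2)
    (hXdist : ∀ ω ∈ cube n,
      P.map (X ω) = volume.withDensity fun x => ENNReal.ofReal (pdens n (a ^ 2) x))
    (L : EuclideanSpace ℝ (Fin n) → Θ → ℝ)
    (hL : ∀ ω θ, L ω θ = (cube n).indicator l (ω + X ω θ)) :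
    (∫ θ, (∫ ω, |L ω θ| ∂(lam n)) ∂P)
      = l1 l - ∫ ω', (∫ ω in (cube n)ᶜ, l ω' * pdens n (a ^ 2) (ω - ω')) ∂(lam n) := by
  have hσ : (0:ℝ) < a ^ 2 := by positivity
  have hcm := cube_measurable n
  have hlm := hl.1
  have hl0 : ∀ z, 0 ≤ l z := fun z => by rcases hl.2 z with h | h <;> simp [h]
  have hl1 : ∀ z, l z ≤ 1 := fun z => by rcases hl.2 z with h | h <;> simp [h]
  have hpm : Measurable fun x : EuclideanSpace ℝ (Fin n) =>
      ENNReal.ofReal (pdens n (a^2) x) := (pdens_cont n (a^2)).measurable.ennreal_ofReal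
  set f : EuclideanSpace ℝ (Fin n) → ℝ≥0∞ :=
    fun z => (cube n).indicator (fun z => ENNReal.ofReal (l z)) z with hf_def
  have hfm : Measurable f := hlm.ennreal_ofReal.indicator hcm
  have hf_le : ∀ z, f z ≤ 1 := by
    intro z
    by_cases hz : z ∈ cube n
    · simp only [hf_def, Set.indicator_of_mem hz]
      exact ENNReal.ofReal_le_one.2 (hl1 z)
    · simp [hf_def, Set.indicator_of_notMem hz]
  have habs : ∀ z, ENNReal.ofReal |(cube n).indicator l z| = f z := by
    intro z
    by_cases hz : z ∈ cube n
    · simp [hf_def, Set.indicator_of_mem hz, abs_of_nonneg (hl0 z)]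
    · simp [hf_def, Set.indicator_of_notMem hz]
  haveI : IsFiniteMeasure (lam n) := by
    constructor
    rw [lam, Measure.restrict_apply_univ, cube_volume]
    exact ENNReal.one_lt_top
  -- Step A : inner integral over θ for ω ∈ cube
  have stepA : ∀ ω ∈ cube n, ∫⁻ θ, f (ω + X ω θ) ∂P
      = ∫⁻ z, ENNReal.ofReal (pdens n (a^2) (z - ω)) * f z := by
    intro ω hω
    have hXω : Measurable (X ω) := hXmeas.comp (measurable_const.prodMk measurable_id)
    have hcomp : Measurable fun y : EuclideanSpace ℝ (Fin n) => f (ω + y) :=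
      hfm.comp (measurable_const.add measurable_id)
    rw [show (∫⁻ θ, f (ω + X ω θ) ∂P) = ∫⁻ y, f (ω + y) ∂(P.map (X ω)) from
      (lintegral_map hcomp hXω).symm, hXdist ω hω,
      lintegral_withDensity_eq_lintegral_mul _ hpm hcomp]
    have h3 : (∫⁻ y, ((fun x => ENNReal.ofReal (pdens n (a^2) x)) * fun y => f (ω + y)) y)
        = ∫⁻ y, (fun z => ENNReal.ofReal (pdens n (a^2) (z - ω)) * f z) (ω + y) := by
      apply lintegral_congr
      intro y
      simp [add_sub_cancel_left]
    rw [h3, MeasureTheory.lintegral_add_left_eq_self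
      (fun z => ENNReal.ofReal (pdens n (a^2) (z - ω)) * f z) ω]
  -- measurability of ω ↦ L ω θ
  have hXsec : ∀ θ, Measurable fun ω => X ω θ := fun θ =>
    hXmeas.comp (measurable_id.prodMk measurable_const)
  have hLmeas : ∀ θ, Measurable fun ω => L ω θ := by
    intro θ
    simp only [hL]
    exact (hlm.indicator hcm).comp (measurable_id.add (hXsec θ))
  -- Step 1 : Bochner to lintegral, inner
  have step1 : ∀ θ, (∫ ω, |L ω θ| ∂(lam n))
      = (∫⁻ ω, f (ω + X ω θ) ∂(lam n)).toReal := by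
    intro θ
    rw [integral_eq_lintegral_of_nonneg_ae (Filter.Eventually.of_forall fun ω => abs_nonneg _)
      (hLmeas θ).abs.aestronglyMeasurable]
    congr 1
    apply lintegral_congr
    intro ω
    rw [hL]
    exact habs _
  simp_rw [step1]
  -- Step 2 : outer integral to lintegral
  have hgm : Measurable fun q : EuclideanSpace ℝ (Fin n) × Θ => f (q.1 + X q.1 q.2) :=
    hfm.comp (measurable_fst.add hXmeas)
  have hbound : ∀ θ, (∫⁻ ω, f (ω + X ω θ) ∂(lam n)) ≤ 1 := by
    intro θ
    calc ∫⁻ ω, f (ω + X ω θ) ∂(lam n) ≤ ∫⁻ _, 1 ∂(lam n) :=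
          lintegral_mono fun ω => hf_le _
      _ = lam n Set.univ := by rw [lintegral_one]
      _ = 1 := by rw [lam, Measure.restrict_apply_univ, cube_volume]
  have hmeas2 : Measurable fun θ => ∫⁻ ω, f (ω + X ω θ) ∂(lam n) := by
    apply Measurable.lintegral_prod_left (f := fun ω θ => f (ω + X ω θ))
    exact hgm
  rw [integral_toReal hmeas2.aemeasurable
    (Filter.Eventually.of_forall fun θ => lt_of_le_of_lt (hbound θ) ENNReal.one_lt_top)]
  -- Step 3 : swap
  have hswap1 : (∫⁻ θ, ∫⁻ ω, f (ω + X ω θ) ∂(lam n) ∂P)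
      = ∫⁻ ω, ∫⁻ θ, f (ω + X ω θ) ∂P ∂(lam n) := by
    apply lintegral_lintegral_swap
    exact (hfm.comp (measurable_snd.add
      (hXmeas.comp (measurable_snd.prodMk measurable_fst)))).aemeasurable
  rw [hswap1]
  -- Step 4 : use stepA on the cube
  have step4 : (∫⁻ ω, ∫⁻ θ, f (ω + X ω θ) ∂P ∂(lam n))
      = ∫⁻ ω in cube n, ∫⁻ z, ENNReal.ofReal (pdens n (a^2) (z - ω)) * f z ∂volume ∂volume := by
    rw [lam]
    exact setLIntegral_congr_fun hcm stepA
  rw [step4]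
  -- Step 5 : rewrite inner integral as set integral over the cube
  have hind : ∀ ω : EuclideanSpace ℝ (Fin n),
      (∫⁻ z, ENNReal.ofReal (pdens n (a^2) (z - ω)) * f z ∂volume)
      = ∫⁻ z in cube n,
          ENNReal.ofReal (pdens n (a^2) (z - ω)) * ENNReal.ofReal (l z) ∂volume := by
    intro ω
    calc (∫⁻ z, ENNReal.ofReal (pdens n (a^2) (z - ω)) * f z ∂volume)
        = ∫⁻ z, (cube n).indicator
            (fun z => ENNReal.ofReal (pdens n (a^2) (z - ω)) * ENNReal.ofReal (l z)) z ∂volume :=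
          lintegral_congr fun z => by
            by_cases hz : z ∈ cube n <;> simp [hf_def, hz]
      _ = _ := lintegral_indicator hcm _
  simp_rw [hind]
  -- Kin / Kout
  set Kin : EuclideanSpace ℝ (Fin n) → ℝ≥0∞ :=
    fun z => ∫⁻ ω in cube n, ENNReal.ofReal (pdens n (a^2) (ω - z)) ∂volume with hKin_def
  set Kout : EuclideanSpace ℝ (Fin n) → ℝ≥0∞ :=
    fun z => ∫⁻ ω in (cube n)ᶜ, ENNReal.ofReal (pdens n (a^2) (ω - z)) ∂volume with hKout_def
  have hKin : Measurable Kin := by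
    apply Measurable.lintegral_prod_left
      (f := fun ω z => ENNReal.ofReal (pdens n (a^2) (ω - z)))
    exact hpm.comp (measurable_fst.sub measurable_snd)
  have hKout : Measurable Kout := by
    apply Measurable.lintegral_prod_left
      (f := fun ω z => ENNReal.ofReal (pdens n (a^2) (ω - z)))
    exact hpm.comp (measurable_fst.sub measurable_snd)
  have hsplit : ∀ z, Kin z + Kout z = 1 := by
    intro z
    rw [hKin_def, hKout_def]
    rw [lintegral_add_compl (fun ω => ENNReal.ofReal (pdens n (a^2) (ω - z))) hcm]
    exact pdens_lintegral_sub n hσ z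
  have hKin_le : ∀ z, Kin z ≤ 1 := fun z => (hsplit z) ▸ le_self_add
  have hKout_le : ∀ z, Kout z ≤ 1 := fun z => (hsplit z) ▸ le_add_self
  -- Step 6 : swap the two cube integrals
  have step6 : (∫⁻ ω in cube n, ∫⁻ z in cube n,
        ENNReal.ofReal (pdens n (a^2) (z - ω)) * ENNReal.ofReal (l z) ∂volume ∂volume)
      = ∫⁻ z in cube n, Kin z * ENNReal.ofReal (l z) ∂volume := by
    rw [lintegral_lintegral_swap (((hpm.comp (measurable_snd.sub measurable_fst)).mul
      (hlm.ennreal_ofReal.comp measurable_snd)).aemeasurable)]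
    apply lintegral_congr
    intro z
    have hmz : Measurable fun ω : EuclideanSpace ℝ (Fin n) =>
        ENNReal.ofReal (pdens n (a^2) (z - ω)) := hpm.comp (measurable_const.sub measurable_id)
    rw [lintegral_mul_const _ hmz]
    congr 1
    rw [hKin_def]
    exact lintegral_congr fun ω => by rw [pdens_symm]
  rw [step6]
  -- A, B, C
  set A : ℝ≥0∞ := ∫⁻ z in cube n, Kin z * ENNReal.ofReal (l z) ∂volume with hA_def
  set B : ℝ≥0∞ := ∫⁻ z in cube n, ENNReal.ofReal (l z) ∂volume with hB_def
  set C : ℝ≥0∞ := ∫⁻ z in cube n, Kout z * ENNReal.ofReal (l z) ∂volume with hC_def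
  have hB_le : B ≤ 1 := by
    rw [hB_def]
    calc (∫⁻ z in cube n, ENNReal.ofReal (l z) ∂volume)
        ≤ ∫⁻ _ in cube n, 1 ∂volume :=
          lintegral_mono fun z => ENNReal.ofReal_le_one.2 (hl1 z)
      _ = volume (cube n) := setLIntegral_one _
      _ = 1 := cube_volume n
  have hA_le : A ≤ B :=
    lintegral_mono fun z => by
      calc Kin z * ENNReal.ofReal (l z) ≤ 1 * ENNReal.ofReal (l z) :=
            mul_le_mul_left (hKin_le z) _
        _ = ENNReal.ofReal (l z) := one_mul _
  have hC_le : C ≤ B :=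
    lintegral_mono fun z => by
      calc Kout z * ENNReal.ofReal (l z) ≤ 1 * ENNReal.ofReal (l z) :=
            mul_le_mul_left (hKout_le z) _
        _ = ENNReal.ofReal (l z) := one_mul _
  have hBne : B ≠ ⊤ := (lt_of_le_of_lt hB_le ENNReal.one_lt_top).ne
  have hAne : A ≠ ⊤ := (lt_of_le_of_lt (hA_le.trans hB_le) ENNReal.one_lt_top).ne
  have hCne : C ≠ ⊤ := (lt_of_le_of_lt (hC_le.trans hB_le) ENNReal.one_lt_top).ne
  have hABC : A + C = B := by
    rw [hA_def, hC_def, hB_def,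
      ← lintegral_add_left (show Measurable fun z => Kin z * ENNReal.ofReal (l z) from
        hKin.mul hlm.ennreal_ofReal) _]
    apply lintegral_congr
    intro z
    rw [← add_mul, hsplit z, one_mul]
  -- l1 l = B.toReal
  have hl1eq : l1 l = B.toReal := by
    rw [l1, integral_eq_lintegral_of_nonneg_ae
      (Filter.Eventually.of_forall fun ω => abs_nonneg _) hlm.abs.aestronglyMeasurable]
    congr 1
    rw [lam]
    exact lintegral_congr fun z => by rw [abs_of_nonneg (hl0 z)]
  -- ξ = C.toReal
  have hxi : (∫ ω', (∫ ω in (cube n)ᶜ, l ω' * pdens n (a^2) (ω - ω')) ∂(lam n))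
      = C.toReal := by
    have hinner : ∀ ω', (∫ ω in (cube n)ᶜ, l ω' * pdens n (a^2) (ω - ω'))
        = (Kout ω' * ENNReal.ofReal (l ω')).toReal := by
      intro ω'
      rw [integral_eq_lintegral_of_nonneg_ae
        (Filter.Eventually.of_forall fun ω => mul_nonneg (hl0 _) (pdens_nonneg n hσ _))
        ((show Measurable fun ω : EuclideanSpace ℝ (Fin n) =>
            l ω' * pdens n (a^2) (ω - ω') from
          ((pdens_cont n _).measurable.comp
            (measurable_id.sub measurable_const)).const_mul _).aestronglyMeasurable)]
      congr 1
      calc (∫⁻ ω in (cube n)ᶜ, ENNReal.ofReal (l ω' * pdens n (a^2) (ω - ω')) ∂volume)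
          = ∫⁻ ω in (cube n)ᶜ,
              ENNReal.ofReal (l ω') * ENNReal.ofReal (pdens n (a^2) (ω - ω')) ∂volume :=
            lintegral_congr fun ω => ENNReal.ofReal_mul (hl0 ω')
        _ = ENNReal.ofReal (l ω') * Kout ω' :=
            lintegral_const_mul _ (show Measurable fun ω : EuclideanSpace ℝ (Fin n) =>
              ENNReal.ofReal (pdens n (a^2) (ω - ω')) from
              hpm.comp (measurable_id.sub measurable_const))
        _ = Kout ω' * ENNReal.ofReal (l ω') := mul_comm _ _
    simp_rw [hinner]
    rw [integral_toReal ((show Measurable fun z => Kout z * ENNReal.ofReal (l z) from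
        hKout.mul hlm.ennreal_ofReal).aemeasurable)
      (Filter.Eventually.of_forall fun z => lt_of_le_of_lt
        (mul_le_one' (hKout_le z) (ENNReal.ofReal_le_one.2 (hl1 z))) ENNReal.one_lt_top)]
    rfl
  rw [hl1eq, hxi]
  have htr : B.toReal = A.toReal + C.toReal := by
    rw [← hABC, ENNReal.toReal_add hAne hCne]
  linarith
end
end

section
/- Fix m ∈ M. If c ∈ M minimizes cross-entropy, i.e., CE_m(c) = inf_{c' ∈ M} CE_m(c'), then the segmentation obtained by thresholding c at 1/2, namely s = I_{[1/2,1]} ∘ c, maximizes Accuracy: A_m(I_{[1/2,1]} ∘ c) = sup_{s' ∈ S} A_m(s'). -/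
open MeasureTheory Real Set
open scoped ENNReal

noncomputable section

-- auxiliary lemmas

lemma ceTerm_zero_left (c : ℝ) : ceTerm 0 c = 0 := if_pos rfl

lemma ceTerm_right_one (m : ℝ) : ceTerm m 1 = 0 := by
  unfold ceTerm; split <;> simp [Real.log_one]

lemma ceTerm_of_ne {m c : ℝ} (hm : m ≠ 0) (hc : c ≠ 0) :
    ceTerm m c = ENNReal.ofReal (-(m * Real.log c)) := by simp [ceTerm, hm, hc]

lemma ceTerm_top {m : ℝ} (hm : m ≠ 0) : ceTerm m 0 = ⊤ := by simp [ceTerm, hm]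

lemma ceTerm_self_le_one {x : ℝ} (hx : x ∈ Set.Icc (0:ℝ) 1) : ceTerm x x ≤ 1 := by
  rcases eq_or_ne x 0 with h0 | h0
  · simp [ceTerm, h0]
  · have hx0 : 0 < x := lt_of_le_of_ne hx.1 (Ne.symm h0)
    have hlog : Real.log x⁻¹ ≤ x⁻¹ - 1 := Real.log_le_sub_one_of_pos (by positivity)
    rw [Real.log_inv] at hlog
    have hxx : x * x⁻¹ = 1 := mul_inv_cancel₀ h0
    have hb : -(x * Real.log x) ≤ 1 := by nlinarith [mul_le_mul_of_nonneg_left hlog hx0.le]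
    rw [ceTerm_of_ne h0 h0]
    calc ENNReal.ofReal (-(x * Real.log x)) ≤ ENNReal.ofReal 1 := ENNReal.ofReal_le_ofReal hb
    _ = 1 := ENNReal.ofReal_one

lemma gibbs_strict {m c : ℝ} (hm : m ∈ Set.Icc (0:ℝ) 1) (hc : c ∈ Set.Icc (0:ℝ) 1)
    (hne : c ≠ m) :
    ceTerm m m + ceTerm (1-m) (1-m) < ceTerm m c + ceTerm (1-m) (1-c) := by
  have h1m : (1 - m) ∈ Set.Icc (0:ℝ) 1 := ⟨by linarith [hm.2], by linarith [hm.1]⟩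
  have hLfin : ceTerm m m + ceTerm (1-m) (1-m) < ⊤ :=
    lt_of_le_of_lt (add_le_add (ceTerm_self_le_one hm) (ceTerm_self_le_one h1m))
      (by norm_num)
  rcases hm.1.eq_or_lt with hm0 | hm0
  · -- m = 0
    subst hm0
    simp only [sub_zero, ceTerm_zero_left, ceTerm_right_one, zero_add, add_zero]
    rcases hc.2.eq_or_lt with hc1 | hc1
    · subst hc1; rw [sub_self, ceTerm_top one_ne_zero]; exact ENNReal.zero_lt_top
    · have hc0 : 0 < c := hc.1.lt_of_ne (Ne.symm hne)
      rw [ceTerm_of_ne one_ne_zero (by linarith : (1:ℝ) - c ≠ 0)]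
      have : Real.log (1 - c) < 0 := Real.log_neg (by linarith) (by linarith)
      exact ENNReal.ofReal_pos.mpr (by nlinarith)
  · rcases hm.2.eq_or_lt with hm1 | hm1
    · -- m = 1
      subst hm1
      simp only [sub_self, ceTerm_zero_left, ceTerm_right_one, zero_add, add_zero]
      rcases hc.1.eq_or_lt with hc0 | hc0
      · rw [← hc0, ceTerm_top one_ne_zero]; exact ENNReal.zero_lt_top
      · rw [ceTerm_of_ne one_ne_zero hc0.ne']
        have hc1 : c < 1 := hc.2.lt_of_ne hne
        have : Real.log c < 0 := Real.log_neg hc0 hc1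
        exact ENNReal.ofReal_pos.mpr (by nlinarith)
    · -- 0 < m < 1
      have h1m0 : (0:ℝ) < 1 - m := by linarith
      rcases hc.1.eq_or_lt with hc0 | hc0
      · -- c = 0
        rw [← hc0, ceTerm_top hm0.ne']
        exact lt_of_lt_of_le hLfin le_self_add
      · rcases hc.2.eq_or_lt with hc1 | hc1
        · -- c = 1
          subst hc1
          rw [sub_self, ceTerm_top h1m0.ne']
          exact lt_of_lt_of_le hLfin le_add_self
        · -- 0 < c < 1
          have h1c0 : (0:ℝ) < 1 - c := by linarith
          have hlog1 : Real.log (c/m) < c/m - 1 :=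
            Real.log_lt_sub_one_of_pos (div_pos hc0 hm0)
              (fun h => hne ((div_eq_one_iff_eq hm0.ne').mp h))
          have hlog2 : Real.log ((1-c)/(1-m)) < (1-c)/(1-m) - 1 :=
            Real.log_lt_sub_one_of_pos (div_pos h1c0 h1m0)
              (fun h => hne (by
                have := (div_eq_one_iff_eq h1m0.ne').mp h
                linarith))
          have h1 : m * Real.log c - m * Real.log m < c - m := by
            have h := mul_lt_mul_of_pos_left hlog1 hm0
            rw [Real.log_div hc0.ne' hm0.ne'] at h
            have e : m * (c / m - 1) = c - m := by field_simp
            rw [e, mul_sub] at h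
            exact h
          have h2 : (1-m) * Real.log (1-c) - (1-m) * Real.log (1-m) < m - c := by
            have h := mul_lt_mul_of_pos_left hlog2 h1m0
            rw [Real.log_div h1c0.ne' h1m0.ne'] at h
            have e : (1-m) * ((1-c) / (1-m) - 1) = m - c := by field_simp; ring
            rw [e, mul_sub] at h
            exact h
          have hA : 0 ≤ -(m * Real.log m) := by
            nlinarith [Real.log_nonpos hm.1 hm.2]
          have hB : 0 ≤ -((1-m) * Real.log (1-m)) := by
            nlinarith [Real.log_nonpos h1m.1 h1m.2]
          have hA' : 0 ≤ -(m * Real.log c) := by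
            nlinarith [Real.log_nonpos hc.1 hc.2]
          have hB' : 0 ≤ -((1-m) * Real.log (1-c)) := by
            nlinarith [Real.log_nonpos (by linarith : (0:ℝ) ≤ 1 - c) (by linarith : (1:ℝ) - c ≤ 1)]
          have hreal : -(m * Real.log m) + -((1-m) * Real.log (1-m))
              < -(m * Real.log c) + -((1-m) * Real.log (1-c)) := by linarith
          rw [ceTerm_of_ne hm0.ne' hm0.ne', ceTerm_of_ne h1m0.ne' h1m0.ne',
            ceTerm_of_ne hm0.ne' hc0.ne', ceTerm_of_ne h1m0.ne' h1c0.ne',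
            ← ENNReal.ofReal_add hA hB, ← ENNReal.ofReal_add hA' hB']
          exact (ENNReal.ofReal_lt_ofReal_iff (lt_of_le_of_lt (add_nonneg hA hB) hreal)).mpr hreal

lemma gibbs_le {m c : ℝ} (hm : m ∈ Set.Icc (0:ℝ) 1) (hc : c ∈ Set.Icc (0:ℝ) 1) :
    ceTerm m m + ceTerm (1-m) (1-m) ≤ ceTerm m c + ceTerm (1-m) (1-c) := by
  rcases eq_or_ne c m with h | h
  · subst h; exact le_refl _
  · exact (gibbs_strict hm hc h).le

lemma ceTerm_meas {n : ℕ} {u v : EuclideanSpace ℝ (Fin n) → ℝ}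
    (hu : Measurable u) (hv : Measurable v) :
    Measurable (fun ω => ceTerm (u ω) (v ω)) := by
  unfold ceTerm
  apply Measurable.ite (hu (measurableSet_singleton 0)) measurable_const
  apply Measurable.ite (hv (measurableSet_singleton 0)) measurable_const
  exact ENNReal.measurable_ofReal.comp ((hu.mul (Real.measurable_log.comp hv)).neg)

lemma lam_univ (n : ℕ) : lam n Set.univ = 1 := by
  rw [lam, Measure.restrict_apply_univ]
  have h := MeasurePreserving.symm _ (EuclideanSpace.volume_preserving_symm_measurableEquiv_toLp (Fin n))
  have h2 := h.measure_preimage (s := cube n)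
    ((MeasurableEquiv.toLp 2 (Fin n → ℝ)).symm.measurable
      (MeasurableSet.univ_pi fun _ => measurableSet_Icc)).nullMeasurableSet
  rw [← h2]
  have : ((MeasurableEquiv.toLp 2 (Fin n → ℝ)).symm.symm ⁻¹' (cube n))
      = Set.univ.pi fun _ : Fin n => Set.Icc (0:ℝ) 1 := rfl
  rw [this, volume_pi_pi (fun _ => Set.Icc (0:ℝ) 1)]; simp


/-- Thresholding a cross-entropy minimizer at `1/2` maximizes Accuracy. -/
theorem crossEnt_min_implies_accuracy_max
    (n : ℕ) (hn : 1 ≤ n)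
    (m : EuclideanSpace ℝ (Fin n) → ℝ) (hm : IsSoft m)
    (c : EuclideanSpace ℝ (Fin n) → ℝ) (hc : IsSoft c)
    (hmin : crossEnt m c
      = (⨅ c' : {c' : EuclideanSpace ℝ (Fin n) → ℝ // IsSoft c'}, crossEnt m c'.1)) :
    accur m (thresh (1 / 2) c)
      = (⨆ s' : {s' : EuclideanSpace ℝ (Fin n) → ℝ // IsSeg s'}, accur m s'.1) := by
  haveI : IsFiniteMeasure (lam n) := ⟨by rw [lam_univ]; exact ENNReal.one_lt_top⟩
  have h1m : ∀ ω, (1 - m ω) ∈ Set.Icc (0:ℝ) 1 :=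
    fun ω => ⟨by linarith [(hm.2 ω).2], by linarith [(hm.2 ω).1]⟩
  -- minimality forces crossEnt m m ≥ crossEnt m c pointwise-integral-wise
  have hle : crossEnt m c ≤ crossEnt m m := hmin.trans_le (iInf_le _ (⟨m, hm⟩ : {c' : EuclideanSpace ℝ (Fin n) → ℝ // IsSoft c'}))
  have hGtop : crossEnt m m ≠ ⊤ := by
    have hb : crossEnt m m ≤ 2 := by
      unfold crossEnt
      calc ∫⁻ ω, (ceTerm (m ω) (m ω) + ceTerm (1 - m ω) (1 - m ω)) ∂(lam n)
          ≤ ∫⁻ _, (2:ℝ≥0∞) ∂(lam n) := by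
            apply lintegral_mono
            intro ω
            calc ceTerm (m ω) (m ω) + ceTerm (1 - m ω) (1 - m ω)
                ≤ 1 + 1 := add_le_add (ceTerm_self_le_one (hm.2 ω)) (ceTerm_self_le_one (h1m ω))
            _ = 2 := one_add_one_eq_two
      _ = 2 * lam n Set.univ := lintegral_const 2
      _ = 2 := by rw [lam_univ, mul_one]
    exact ne_top_of_le_ne_top (by norm_num) hb
  have hFmeas : AEMeasurable
      (fun ω => ceTerm (m ω) (c ω) + ceTerm (1 - m ω) (1 - c ω)) (lam n) :=
    ((ceTerm_meas hm.1 hc.1).add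
      (ceTerm_meas (measurable_const.sub hm.1) (measurable_const.sub hc.1))).aemeasurable
  have hae0 : (fun ω => ceTerm (m ω) (m ω) + ceTerm (1 - m ω) (1 - m ω))
      =ᵐ[lam n] (fun ω => ceTerm (m ω) (c ω) + ceTerm (1 - m ω) (1 - c ω)) := by
    apply ae_eq_of_ae_le_of_lintegral_le
      (ae_of_all _ fun ω => gibbs_le (hm.2 ω) (hc.2 ω)) hGtop hFmeas
    exact hle
  have hcm : c =ᵐ[lam n] m := by
    filter_upwards [hae0] with ω h
    by_contra hne
    exact (gibbs_strict (hm.2 ω) (hc.2 ω) hne).ne h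
  -- the thresholded function is a segmentation
  have hTseg : IsSeg (thresh (1/2 : ℝ) c) :=
    ⟨Measurable.ite (measurableSet_le measurable_const hc.1) measurable_const measurable_const,
     fun ω => by unfold thresh; split <;> simp⟩
  -- integrability of accuracy integrands
  have hInt : ∀ s : EuclideanSpace ℝ (Fin n) → ℝ, IsSeg s →
      Integrable (fun ω => s ω * m ω + (1 - s ω) * (1 - m ω)) (lam n) := by
    intro s hs
    refine ⟨((hs.1.mul hm.1).add
      ((measurable_const.sub hs.1).mul (measurable_const.sub hm.1))).aestronglyMeasurable, ?_⟩
    apply HasFiniteIntegral.of_bounded (C := (1:ℝ))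
    apply ae_of_all
    intro ω
    rw [Real.norm_eq_abs, abs_le]
    rcases hs.2 ω with h0 | h0 <;> rw [h0] <;>
      constructor <;> linarith [(hm.2 ω).1, (hm.2 ω).2]
  -- thresholding at 1/2 dominates every segmentation
  have hbound : ∀ s : EuclideanSpace ℝ (Fin n) → ℝ, IsSeg s →
      accur m s ≤ accur m (thresh (1/2 : ℝ) c) := by
    intro s hs
    unfold accur
    apply integral_mono_ae (hInt s hs) (hInt _ hTseg)
    filter_upwards [hcm] with ω h
    unfold thresh
    rw [h]
    rcases hs.2 ω with h0 | h0 <;> rw [h0] <;> split_ifs with hh <;>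
      linarith [(hm.2 ω).1, (hm.2 ω).2]
  haveI : Nonempty {s' : EuclideanSpace ℝ (Fin n) → ℝ // IsSeg s'} :=
    ⟨⟨thresh (1/2 : ℝ) c, hTseg⟩⟩
  refine le_antisymm ?_ (ciSup_le fun s' => hbound s'.1 s'.2)
  have hbdd : BddAbove (Set.range
      fun s' : {s' : EuclideanSpace ℝ (Fin n) → ℝ // IsSeg s'} => accur m s'.1) := by
    refine ⟨accur m (thresh (1/2 : ℝ) c), ?_⟩
    rintro x ⟨s', rfl⟩
    exact hbound s'.1 s'.2
  exact le_ciSup hbdd ⟨thresh (1/2 : ℝ) c, hTseg⟩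
end
end

section
/- Fix m ∈ M with ‖m‖₁ > 0. If c ∈ M minimizes soft-Dice, i.e., SD_m(c) = inf_{c' ∈ M} SD_m(c'), then the segmentation obtained by thresholding c at 1/2, namely s = I_{[1/2,1]} ∘ c, maximizes Dice: D_m(I_{[1/2,1]} ∘ c) = sup_{s' ∈ S} D_m(s'). -/
open MeasureTheory Real Set
open scoped ENNReal

noncomputable section

-- auxiliary lemmas
instance lam_finite (n : ℕ) : IsFiniteMeasure (lam n) := by
  constructor
  rw [lam, Measure.restrict_apply_univ, cube, (PiLp.volume_preserving_ofLp (ι := Fin n)).measure_preimage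
    (MeasurableSet.univ_pi fun _ => measurableSet_Icc).nullMeasurableSet]
  exact (isCompact_univ_pi fun _ => (isCompact_Icc : IsCompact (Set.Icc (0:ℝ) 1))).measure_lt_top

lemma IsSeg.isSoft {n : ℕ} {s : EuclideanSpace ℝ (Fin n) → ℝ} (hs : IsSeg s) : IsSoft s := by
  refine ⟨hs.1, fun ω => ?_⟩
  rcases hs.2 ω with h | h <;> rw [h] <;> constructor <;> norm_num

lemma IsSoft.integrable {n : ℕ} {f : EuclideanSpace ℝ (Fin n) → ℝ} (hf : IsSoft f) :
    Integrable f (lam n) := by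
  refine (integrable_const (1:ℝ)).mono' hf.1.aestronglyMeasurable ?_
  filter_upwards with ω
  have h := hf.2 ω
  rw [Real.norm_eq_abs, abs_le]
  exact ⟨by linarith [h.1], by simpa using h.2⟩

lemma IsSoft.mul {n : ℕ} {f g : EuclideanSpace ℝ (Fin n) → ℝ} (hf : IsSoft f) (hg : IsSoft g) :
    IsSoft (fun ω => f ω * g ω) := by
  refine ⟨hf.1.mul hg.1, fun ω => ?_⟩
  have h1 := hf.2 ω; have h2 := hg.2 ω
  exact ⟨mul_nonneg h1.1 h2.1, mul_le_one₀ h1.2 h2.1 h2.2⟩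

lemma l1_eq_integral {n : ℕ} {f : EuclideanSpace ℝ (Fin n) → ℝ} (hf : IsSoft f) :
    l1 f = ∫ ω, f ω ∂(lam n) :=
  integral_congr_ae (Filter.Eventually.of_forall fun ω => abs_of_nonneg (hf.2 ω).1)

lemma l1_nonneg {n : ℕ} (f : EuclideanSpace ℝ (Fin n) → ℝ) : 0 ≤ l1 f :=
  integral_nonneg fun ω => abs_nonneg _

/-- basic bound: `2∫c'm ≤ l1 c' + l1 m` for soft `c', m`. -/
lemma two_int_le {n : ℕ} {m c' : EuclideanSpace ℝ (Fin n) → ℝ} (hm : IsSoft m)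
    (hc' : IsSoft c') :
    2 * (∫ ω, c' ω * m ω ∂(lam n)) ≤ l1 c' + l1 m := by
  rw [l1_eq_integral hc', l1_eq_integral hm, ← integral_add hc'.integrable hm.integrable,
    ← integral_const_mul]
  refine integral_mono ((hc'.mul hm).integrable.const_mul 2)
    (hc'.integrable.add hm.integrable) fun ω => ?_
  have h1 := hc'.2 ω; have h2 := hm.2 ω
  have : c' ω * m ω ≤ m ω := mul_le_of_le_one_left h2.1 h1.2
  have : c' ω * m ω ≤ c' ω := mul_le_of_le_one_right h1.1 h2.2
  simp only []
  nlinarith [hc'.2 ω, hm.2 ω]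

lemma sdice_nonneg {n : ℕ} {m c' : EuclideanSpace ℝ (Fin n) → ℝ} (hm : IsSoft m)
    (hm1 : 0 < l1 m) (hc' : IsSoft c') : 0 ≤ sdice m c' := by
  have hD : 0 < l1 c' + l1 m := by linarith [l1_nonneg c']
  have h := two_int_le hm hc'
  rw [sdice, sub_nonneg]
  exact div_le_one_of_le₀ h hD.le

/-- Thresholding a soft-Dice minimizer at `1/2` maximizes Dice. -/
theorem sdice_min_implies_dice_max
    (n : ℕ) (hn : 1 ≤ n)
    (m : EuclideanSpace ℝ (Fin n) → ℝ) (hm : IsSoft m) (hm1 : 0 < l1 m)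
    (c : EuclideanSpace ℝ (Fin n) → ℝ) (hc : IsSoft c)
    (hmin : sdice m c
      = (⨅ c' : {c' : EuclideanSpace ℝ (Fin n) → ℝ // IsSoft c'}, sdice m c'.1)) :
    dice m (thresh (1 / 2) c)
      = (⨆ s' : {s' : EuclideanSpace ℝ (Fin n) → ℝ // IsSeg s'}, dice m s'.1) := by
  classical
  have hDc : 0 < l1 c + l1 m := by linarith [l1_nonneg c]
  set r : ℝ := 2 * (∫ ω, c ω * m ω ∂(lam n)) / (l1 c + l1 m) with hr
  have hBdd : BddBelow (Set.range fun c' : {c' : EuclideanSpace ℝ (Fin n) → ℝ // IsSoft c'} =>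
      sdice m c'.1) := ⟨0, by rintro x ⟨c', rfl⟩; exact sdice_nonneg hm hm1 c'.2⟩
  -- Claim 1 : every soft c' satisfies 2⟨c',m⟩ ≤ r (‖c'‖+‖m‖)
  have key : ∀ c' : EuclideanSpace ℝ (Fin n) → ℝ, IsSoft c' →
      2 * (∫ ω, c' ω * m ω ∂(lam n)) ≤ r * (l1 c' + l1 m) := by
    intro c' hc'
    have hD' : 0 < l1 c' + l1 m := by linarith [l1_nonneg c']
    have h1 : sdice m c ≤ sdice m c' := hmin ▸ ciInf_le hBdd ⟨c', hc'⟩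
    rw [sdice, sdice] at h1
    have h2 : 2 * (∫ ω, c' ω * m ω ∂(lam n)) / (l1 c' + l1 m) ≤ r := by
      rw [hr]; linarith
    exact (div_le_iff₀ hD').mp h2
  have hFc : 2 * (∫ ω, c ω * m ω ∂(lam n)) = r * (l1 c + l1 m) := by
    rw [hr, div_mul_cancel₀ _ hDc.ne']
  set g : EuclideanSpace ℝ (Fin n) → ℝ := fun ω => 2 * m ω - r with hg
  have hgmeas : Measurable g := (hm.1.const_mul 2).sub measurable_const
  -- F(c') = ∫ c' g
  have Fint : ∀ c' : EuclideanSpace ℝ (Fin n) → ℝ, IsSoft c' →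
      ∫ ω, c' ω * g ω ∂(lam n)
        = 2 * (∫ ω, c' ω * m ω ∂(lam n)) - r * l1 c' := by
    intro c' hc'
    rw [l1_eq_integral hc']
    have h1 : Integrable (fun ω => 2 * (c' ω * m ω)) (lam n) :=
      (hc'.mul hm).integrable.const_mul 2
    have h2 : Integrable (fun ω => r * c' ω) (lam n) := hc'.integrable.const_mul r
    calc ∫ ω, c' ω * g ω ∂(lam n)
        = ∫ ω, (2 * (c' ω * m ω) - r * c' ω) ∂(lam n) := by
          apply integral_congr_ae; filter_upwards with ω; rw [hg]; ring
      _ = _ := by rw [integral_sub h1 h2, integral_const_mul, integral_const_mul]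
  have int_mul_g : ∀ c' : EuclideanSpace ℝ (Fin n) → ℝ, IsSoft c' →
      Integrable (fun ω => c' ω * g ω) (lam n) := by
    intro c' hc'
    have he : (fun ω => c' ω * g ω) = fun ω => 2 * (c' ω * m ω) - r * c' ω := by
      funext ω; rw [hg]; ring
    rw [he]
    exact ((hc'.mul hm).integrable.const_mul 2).sub (hc'.integrable.const_mul r)
  set cstar : EuclideanSpace ℝ (Fin n) → ℝ := fun ω => if 0 ≤ g ω then 1 else 0 with hcs
  have hcstar : IsSoft cstar := by
    refine ⟨Measurable.ite (measurableSet_le measurable_const hgmeas)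
      measurable_const measurable_const, fun ω => ?_⟩
    by_cases h : 0 ≤ g ω <;> simp [hcs, h]
  have hpt : ∀ ω, c ω * g ω ≤ cstar ω * g ω := by
    intro ω
    by_cases h : 0 ≤ g ω
    · have h1 : cstar ω = 1 := by simp [hcs, h]
      rw [h1, one_mul]
      exact mul_le_of_le_one_left h (hc.2 ω).2
    · push_neg at h
      have h1 : cstar ω = 0 := by simp [hcs, not_le.mpr h]
      rw [h1, zero_mul]
      exact mul_nonpos_of_nonneg_of_nonpos (hc.2 ω).1 h.le
  have hFle : ∫ ω, cstar ω * g ω ∂(lam n) ≤ ∫ ω, c ω * g ω ∂(lam n) := by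
    rw [Fint cstar hcstar, Fint c hc]
    have h1 := key cstar hcstar
    have e1 : r * (l1 cstar + l1 m) = r * l1 cstar + r * l1 m := by ring
    have e2 : r * (l1 c + l1 m) = r * l1 c + r * l1 m := by ring
    linarith
  have hae0 : (fun ω => cstar ω * g ω - c ω * g ω) =ᵐ[lam n] 0 := by
    have hint : Integrable (fun ω => cstar ω * g ω - c ω * g ω) (lam n) :=
      (int_mul_g cstar hcstar).sub (int_mul_g c hc)
    have hnn : 0 ≤ᵐ[lam n] fun ω => cstar ω * g ω - c ω * g ω :=
      Filter.Eventually.of_forall fun ω => sub_nonneg.mpr (hpt ω)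
    have hz : ∫ ω, (cstar ω * g ω - c ω * g ω) ∂(lam n) = 0 := by
      refine le_antisymm ?_ (integral_nonneg fun ω => sub_nonneg.mpr (hpt ω))
      rw [integral_sub (int_mul_g cstar hcstar) (int_mul_g c hc)]
      linarith
    exact (integral_eq_zero_iff_of_nonneg_ae hnn hint).mp hz
  set s := thresh (1/2) c with hsdef
  have hseg : IsSeg s := by
    refine ⟨Measurable.ite (measurableSet_le measurable_const hc.1)
      measurable_const measurable_const, fun ω => ?_⟩
    rw [hsdef]
    simp only [thresh]
    by_cases h : (1:ℝ)/2 ≤ c ω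
    · right; exact if_pos h
    · left; exact if_neg h
  have hssoft := hseg.isSoft
  have haesg : (fun ω => s ω * g ω) =ᵐ[lam n] fun ω => c ω * g ω := by
    filter_upwards [hae0] with ω hω
    simp only [Pi.zero_apply] at hω
    have hcg : cstar ω * g ω = c ω * g ω := by linarith
    rcases lt_trichotomy (g ω) 0 with hlt | heq | hgt
    · have hcst : cstar ω = 0 := by simp [hcs, not_le.mpr hlt]
      rw [hcst, zero_mul] at hcg
      have hc0 : c ω = 0 := by
        rcases mul_eq_zero.mp hcg.symm with h | h
        · exact h
        · exact absurd h hlt.ne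
      have hs0 : s ω = 0 := by
        rw [hsdef]; simp only [thresh, hc0]; norm_num
      rw [hs0, hc0]
    · simp [heq]
    · have hcst : cstar ω = 1 := by simp [hcs, hgt.le]
      rw [hcst, one_mul] at hcg
      have hc1 : c ω = 1 := by
        have h2 : (c ω - 1) * g ω = 0 := by linarith
        rcases mul_eq_zero.mp h2 with h | h
        · linarith
        · exact absurd h hgt.ne'
      have hs1 : s ω = 1 := by
        rw [hsdef]; simp only [thresh, hc1]; norm_num
      rw [hs1, hc1]
  have hFs : ∫ ω, s ω * g ω ∂(lam n) = ∫ ω, c ω * g ω ∂(lam n) :=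
    integral_congr_ae haesg
  have hFs' : 2 * (∫ ω, s ω * m ω ∂(lam n)) = r * (l1 s + l1 m) := by
    have h1 := Fint s hssoft
    have h2 := Fint c hc
    have e1 : r * (l1 s + l1 m) = r * l1 s + r * l1 m := by ring
    have e2 : r * (l1 c + l1 m) = r * l1 c + r * l1 m := by ring
    linarith
  have hDs : 0 < l1 s + l1 m := by linarith [l1_nonneg s]
  have hdice_s : dice m s = r := by
    rw [dice, hFs', mul_div_assoc, div_self hDs.ne', mul_one]
  have hub : ∀ s' : {s' : EuclideanSpace ℝ (Fin n) → ℝ // IsSeg s'},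
      dice m s'.1 ≤ dice m s := by
    intro s'
    rw [hdice_s, dice]
    have hD' : 0 < l1 s'.1 + l1 m := by linarith [l1_nonneg s'.1]
    exact (div_le_iff₀ hD').mpr (key s'.1 s'.2.isSoft)
  haveI : Nonempty {s' : EuclideanSpace ℝ (Fin n) → ℝ // IsSeg s'} := ⟨⟨s, hseg⟩⟩
  have hbdd : BddAbove (Set.range fun s' : {s' : EuclideanSpace ℝ (Fin n) → ℝ // IsSeg s'} =>
      dice m s'.1) := ⟨dice m s, by rintro x ⟨s', rfl⟩; exact hub s'⟩
  exact le_antisymm (le_ciSup hbdd ⟨s, hseg⟩) (ciSup_le hub)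
end
end
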